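/- Equality case in the monotonicity relation: Let Ω ⊂ ℝⁿ be a bounded, open, convex domain and let u, w ∈ K with 0 < R(u) < ∞, such that Mw = R(u)(−u)^n L^n on Ω and R(w) ‖w‖_{L^{n+1}(Ω)}^n = R(u) ‖u‖_{L^{n+1}(Ω)}^n. Then w = u on Ω. -/

import Mathlib

open MeasureTheory Set Filter Metric
open scoped ENNReal RealInnerProductSpace Topology

noncomputable section

/-- Euclidean space `ℝⁿ`. -/
abbrev Eucl (n : ℕ) : Type := EuclideanSpace ℝ (Fin n)

/-- Subdifferential of `u` at `x`, relative to `Ω`: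
`∂u(x) = {p : u(y) ≥ u(x) + p·(y−x) for all y ∈ Ω}`. -/
def subdiff {n : ℕ} (Ω : Set (Eucl n)) (u : Eucl n → ℝ) (x : Eucl n) : Set (Eucl n) :=
  {p | ∀ y ∈ Ω, u x + (inner ℝ p (y - x) : ℝ) ≤ u y}

/-- Image of a set `E` under the subdifferential map: `∂u(E) = ⋃_{x ∈ E} ∂u(x)`. -/
def subdiffImage {n : ℕ} (Ω : Set (Eucl n)) (u : Eucl n → ℝ) (E : Set (Eucl n)) :
    Set (Eucl n) :=
  ⋃ x ∈ E, subdiff Ω u x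

/-- The Monge–Ampère measure of `u`, as a set function: `Mu(E) = L^n(∂u(E))`. -/
def MAm {n : ℕ} (Ω : Set (Eucl n)) (u : Eucl n → ℝ) (E : Set (Eucl n)) : ℝ≥0∞ :=
  volume (subdiffImage Ω u E)

/-- The Monge–Ampère energy `I(u) = ∫_Ω (−u) dMu`, expressed via the layer-cake formula
for the (nonnegative) integrand `−u`. -/
def MAenergy {n : ℕ} (Ω : Set (Eucl n)) (u : Eucl n → ℝ) : ℝ≥0∞ :=
  ∫⁻ t in Ioi (0 : ℝ), MAm Ω u {x ∈ Ω | t < -u x}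

/-- The integral `∫_Ω f dMu` of a signed integrand `f` against the Monge–Ampère measure of `u`,
expressed via the layer-cake formula. -/
def MAint {n : ℕ} (Ω : Set (Eucl n)) (u : Eucl n → ℝ) (f : Eucl n → ℝ) : ℝ :=
  (∫⁻ t in Ioi (0 : ℝ), MAm Ω u {x ∈ Ω | t < f x}).toReal -
    (∫⁻ t in Ioi (0 : ℝ), MAm Ω u {x ∈ Ω | f x < -t}).toReal

/-- The Rayleigh quotient `R(u) = I(u) / ∫_Ω (−u)^{n+1}`. -/
def Rq {n : ℕ} (Ω : Set (Eucl n)) (u : Eucl n → ℝ) : ℝ≥0∞ :=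
  MAenergy Ω u / ∫⁻ x in Ω, ENNReal.ofReal ((-u x) ^ (n + 1))

/-- The class `K` of continuous functions on `cl Ω` that are convex, not identically zero
in `Ω`, and vanish on `∂Ω`. -/
def memK {n : ℕ} (Ω : Set (Eucl n)) (u : Eucl n → ℝ) : Prop :=
  ContinuousOn u (closure Ω) ∧ ConvexOn ℝ Ω u ∧ (∃ x ∈ Ω, u x ≠ 0) ∧
    ∀ x ∈ frontier Ω, u x = 0

/-- The Monge–Ampère eigenvalue `λ_MA = inf_{u ∈ K} R(u)`. -/
def lamMA {n : ℕ} (Ω : Set (Eucl n)) : ℝ≥0∞ :=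
  ⨅ (u : Eucl n → ℝ) (_ : memK Ω u), Rq Ω u

/-- `u` is a Monge–Ampère eigenfunction: `u ∈ K` and `Mu = λ_MA (−u)^n L^n` on `Ω`. -/
def IsMAEigenfunction {n : ℕ} (Ω : Set (Eucl n)) (u : Eucl n → ℝ) : Prop :=
  memK Ω u ∧ ∀ E ⊆ Ω, MeasurableSet E →
    MAm Ω u E = ∫⁻ x in E, lamMA Ω * ENNReal.ofReal ((-u x) ^ n)

/-- The inverse iteration scheme: `u 0` is admissible initial data, and for each `k`,
`u (k+1)` is (the unique) convex solution, continuous up to the boundary and vanishing there,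
of `M u_{k+1} = R(u_k) (−u_k)^n L^n` on `Ω`. -/
def IterScheme {n : ℕ} (Ω : Set (Eucl n)) (u : ℕ → Eucl n → ℝ) : Prop :=
  ContinuousOn (u 0) (closure Ω) ∧ ConvexOn ℝ Ω (u 0) ∧
    (∀ x ∈ frontier Ω, u 0 x ≤ 0) ∧ Rq Ω (u 0) < ⊤ ∧
    (∀ E ⊆ Ω, MeasurableSet E → volume E ≤ MAm Ω (u 0) E) ∧
    ∀ k : ℕ, ContinuousOn (u (k + 1)) (closure Ω) ∧ ConvexOn ℝ Ω (u (k + 1)) ∧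
      (∀ x ∈ frontier Ω, u (k + 1) x = 0) ∧
      ∀ E ⊆ Ω, MeasurableSet E →
        MAm Ω (u (k + 1)) E = ∫⁻ x in E, Rq Ω (u k) * ENNReal.ofReal ((-u k x) ^ n)

/-- The `L^∞(Ω)` norm (sup norm) of `u` on `Ω`. -/
def supN {n : ℕ} (Ω : Set (Eucl n)) (u : Eucl n → ℝ) : ℝ :=
  ⨆ x ∈ Ω, |u x|

/-- The `L^p(Ω)` norm of `u`. -/
def LpN {n : ℕ} (Ω : Set (Eucl n)) (p : ℝ) (u : Eucl n → ℝ) : ℝ :=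
  (∫ x in Ω, |u x| ^ p) ^ (1 / p)

/-- The determinant of the Hessian of `u` at `x`. -/
def hessDet {n : ℕ} (u : Eucl n → ℝ) (x : Eucl n) : ℝ :=
  (Matrix.of fun i j : Fin n =>
    iteratedFDeriv ℝ 2 u x ![EuclideanSpace.single i (1 : ℝ), EuclideanSpace.single j (1 : ℝ)]).det

/-!
Convex functions vanishing on `∂Ω` are nonpositive. By the layer-cake formula, the equation
`Mw = R(u) (-u)^n` gives `I(w) = R(u) ∫_Ω (-w) (-u)^n`, so the hypothesis on the Rayleigh
quotients says precisely that Hölder's inequality `∫_Ω (-w) (-u)^n ≤ ‖w‖_{n+1} ‖u‖_{n+1}^n` is an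
equality. Integrating the pointwise Young inequality `(n+1) a b^n ≤ a^(n+1) + n b^(n+1)`, strict
for `a ≠ b`, shows that then `u = c w` with `c = ‖u‖_{n+1} / ‖w‖_{n+1}`. Hence
`Mu = c^n R(u) (-u)^n`, and computing `I(u)` from this equation gives `R(u) = c^n R(u)`, so `c = 1`.
-/

section ConvexNonpos

variable {E : Type*} [NormedAddCommGroup E] [NormedSpace ℝ E]

theorem ConvexOn.closure_of_continuousOn {s : Set E} {f : E → ℝ} (hf : ConvexOn ℝ s f)
    (hc : ContinuousOn f (closure s)) : ConvexOn ℝ (closure s) f := by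
  refine ⟨hf.1.closure, fun x hx y hy a b ha hb hab => ?_⟩
  have hsub : closure (s ×ˢ s) ⊆ closure s ×ˢ closure s := closure_prod_eq.subset
  have hmaps : MapsTo (fun p : E × E => a • p.1 + b • p.2) (closure (s ×ˢ s)) (closure s) :=
    fun p hp => hf.1.closure (hsub hp).1 (hsub hp).2 ha hb hab
  have hfst : ContinuousOn (fun p : E × E => f p.1) (closure (s ×ˢ s)) :=
    hc.comp continuousOn_fst fun p hp => (hsub hp).1
  have hsnd : ContinuousOn (fun p : E × E => f p.2) (closure (s ×ˢ s)) :=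
    hc.comp continuousOn_snd fun p hp => (hsub hp).2
  exact le_on_closure (s := s ×ˢ s) (f := fun p : E × E => f (a • p.1 + b • p.2))
    (g := fun p => a • f p.1 + b • f p.2) (fun p hp => hf.2 hp.1 hp.2 ha hb hab)
    (hc.comp (by fun_prop) hmaps) ((hfst.const_smul a).add (hsnd.const_smul b))
    (closure_prod_eq.symm.subset (mk_mem_prod hx hy))

theorem exists_pos_add_smul_mem_frontier {Ω : Set E} (hΩo : IsOpen Ω)
    (hΩb : Bornology.IsBounded Ω) {x : E} (hx : x ∈ Ω) {e : E} (he : e ≠ 0) :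
    ∃ t : ℝ, 0 < t ∧ x + t • e ∈ frontier Ω := by
  set K : Set ℝ := (fun t : ℝ => x + t • e) ⁻¹' Ω
  have hcont : Continuous fun t : ℝ => x + t • e := by fun_prop
  have hKo : IsOpen K := hΩo.preimage hcont
  have hK0 : (0 : ℝ) ∈ K := by simpa [K] using hx
  obtain ⟨R, hR⟩ := hΩb.subset_closedBall x
  have hbdd : BddAbove K := by
    refine ⟨R / ‖e‖, fun t ht => (le_div_iff₀ (norm_pos_iff.2 he)).2 ?_⟩
    calc t * ‖e‖ ≤ ‖t‖ * ‖e‖ := by gcongr; exact Real.le_norm_self t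
      _ = dist (x + t • e) x := by rw [dist_eq_norm, add_sub_cancel_left, norm_smul]
      _ ≤ R := hR ht
  have hsup : sSup K ∈ frontier K := by
    refine ⟨csSup_mem_closure ⟨0, hK0⟩ hbdd, fun hmem => ?_⟩
    rw [hKo.interior_eq] at hmem
    obtain ⟨t, hlt, ht⟩ := ((frequently_gt_nhds (sSup K)).and_eventually (hKo.mem_nhds hmem)).exists
    exact (le_csSup hbdd ht).not_gt hlt
  have hpos : 0 < sSup K := (le_csSup hbdd hK0).lt_of_ne fun h =>
    hsup.2 (by rw [hKo.interior_eq, ← h]; exact hK0)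
  exact ⟨sSup K, hpos, hcont.frontier_preimage_subset Ω hsup⟩

theorem ConvexOn.nonpos_of_nonpos_on_frontier [Nontrivial E] {Ω : Set E} {u : E → ℝ}
    (hu : ConvexOn ℝ Ω u) (hΩo : IsOpen Ω) (hΩb : Bornology.IsBounded Ω)
    (hc : ContinuousOn u (closure Ω)) (hbd : ∀ x ∈ frontier Ω, u x ≤ 0) :
    ∀ x ∈ Ω, u x ≤ 0 := by
  intro x hx
  obtain ⟨e, he⟩ := exists_ne (0 : E)
  obtain ⟨s, hs, hse⟩ := exists_pos_add_smul_mem_frontier hΩo hΩb hx he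
  obtain ⟨t, ht, hte⟩ := exists_pos_add_smul_mem_frontier hΩo hΩb hx (neg_ne_zero.2 he)
  have hseg : x ∈ segment ℝ (x + s • e) (x + t • -e) := by
    refine ⟨t / (s + t), s / (s + t), by positivity, by positivity,
      by rw [← add_div, add_comm, div_self (by positivity)], ?_⟩
    match_scalars <;> field_simp <;> ring
  calc u x ≤ max (u (x + s • e)) (u (x + t • -e)) :=
        (hu.closure_of_continuousOn hc).le_max_of_mem_segment (frontier_subset_closure hse)
          (frontier_subset_closure hte) hseg
    _ ≤ 0 := max_le (hbd _ hse) (hbd _ hte)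

end ConvexNonpos

theorem young_inequality_pow_succ_of_ne {n : ℕ} (hn : 1 ≤ n) {a b : ℝ} (ha : 0 ≤ a) (hb : 0 ≤ b)
    (hab : a ≠ b) : (n + 1) * (a * b ^ n) < a ^ (n + 1) + n * b ^ (n + 1) := by
  rcases hb.eq_or_lt with rfl | hb
  · have : 0 < a := ha.lt_of_ne hab.symm
    simp [zero_pow (by omega : n ≠ 0)]
    positivity
  -- Bernoulli's inequality for `t = a / b ≠ 1`, multiplied by `b ^ (n + 1)`
  have hbern := one_add_mul_self_lt_rpow_one_add (s := a / b - 1)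
    (by linarith [div_nonneg ha hb.le]) (by rwa [sub_ne_zero, Ne, div_eq_one_iff_eq hb.ne'])
    (p := n + 1) (by norm_cast; omega)
  rw [add_sub_cancel, show ((n : ℝ) + 1) = ((n + 1 : ℕ) : ℝ) by norm_cast, Real.rpow_natCast,
    div_pow, lt_div_iff₀ (by positivity)] at hbern
  have hexpand : (1 + ((n + 1 : ℕ) : ℝ) * (a / b - 1)) * b ^ (n + 1)
      = (n + 1) * (a * b ^ n) - n * b ^ (n + 1) := by
    field_simp
    push_cast
    ring
  linarith

theorem young_inequality_pow_succ (n : ℕ) {a b : ℝ} (ha : 0 ≤ a) (hb : 0 ≤ b) :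
    (n + 1) * (a * b ^ n) ≤ a ^ (n + 1) + n * b ^ (n + 1) := by
  rcases eq_or_ne a b with rfl | hab
  · exact le_of_eq (by ring)
  rcases Nat.eq_zero_or_pos n with rfl | hn
  · simp
  exact (young_inequality_pow_succ_of_ne hn ha hb hab).le

theorem ae_mul_eq_mul_of_integral_mul_pow_eq {α : Type*} [MeasurableSpace α] {μ : Measure α}
    {n : ℕ} (hn : 1 ≤ n) {F f : α → ℝ} (hF0 : 0 ≤ᵐ[μ] F) (hf0 : 0 ≤ᵐ[μ] f)
    (hFi : Integrable (fun x => F x ^ (n + 1)) μ) (hfi : Integrable (fun x => f x ^ (n + 1)) μ)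
    (hFfi : Integrable (fun x => F x * f x ^ n) μ) {A B : ℝ} (hA : 0 < A) (hB : 0 < B)
    (hFA : ∫ x, F x ^ (n + 1) ∂μ = A ^ (n + 1)) (hfB : ∫ x, f x ^ (n + 1) ∂μ = B ^ (n + 1))
    (hFf : ∫ x, F x * f x ^ n ∂μ = A * B ^ n) :
    ∀ᵐ x ∂μ, B * F x = A * f x := by
  -- the Young defect of `F / A` and `f / B`: nonnegative, with integral `1 + n - (n + 1) = 0`
  set D : α → ℝ := fun x => (A ^ (n + 1))⁻¹ * F x ^ (n + 1) + n * (B ^ (n + 1))⁻¹ * f x ^ (n + 1)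
    - (n + 1) * (A * B ^ n)⁻¹ * (F x * f x ^ n) with hD
  have hD_eq : ∀ x, D x = (F x / A) ^ (n + 1) + n * (f x / B) ^ (n + 1)
      - (n + 1) * (F x / A * (f x / B) ^ n) := fun x => by
    simp only [hD, div_pow]
    field_simp
  have h₁ : Integrable (fun x => (A ^ (n + 1))⁻¹ * F x ^ (n + 1)) μ := hFi.const_mul _
  have h₂ : Integrable (fun x => n * (B ^ (n + 1))⁻¹ * f x ^ (n + 1)) μ := hfi.const_mul _
  have h₃ : Integrable (fun x => (n + 1) * (A * B ^ n)⁻¹ * (F x * f x ^ n)) μ :=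
    hFfi.const_mul _
  have h₁₂ : Integrable (fun x => (A ^ (n + 1))⁻¹ * F x ^ (n + 1)
      + n * (B ^ (n + 1))⁻¹ * f x ^ (n + 1)) μ := h₁.add h₂
  have hDi : Integrable D μ := h₁₂.sub h₃
  have hD_integral : ∫ x, D x ∂μ = 0 := by
    rw [hD, integral_sub h₁₂ h₃, integral_add h₁ h₂, integral_const_mul,
      integral_const_mul, integral_const_mul, hFA, hfB, hFf]
    field_simp
    ring
  have hD0 : 0 ≤ᵐ[μ] D := by
    filter_upwards [hF0, hf0] with x hFx hfx
    rw [hD_eq, Pi.zero_apply, sub_nonneg]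
    exact young_inequality_pow_succ n (div_nonneg hFx hA.le) (div_nonneg hfx hB.le)
  filter_upwards [hF0, hf0, (integral_eq_zero_iff_of_nonneg_ae hD0 hDi).1 hD_integral]
    with x hFx hfx hDx
  by_contra hne
  have hlt := young_inequality_pow_succ_of_ne hn (div_nonneg hFx hA.le) (div_nonneg hfx hB.le)
    (fun h => hne (by field_simp at h; linarith))
  have : D x = 0 := hDx
  rw [hD_eq] at this
  linarith

theorem ContinuousOn.integrableOn_of_isBounded {X : Type*} [MetricSpace X] [ProperSpace X]
    [MeasurableSpace X] [OpensMeasurableSpace X] {μ : Measure X} [IsFiniteMeasureOnCompacts μ]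
    {s : Set X} (hs : Bornology.IsBounded s) {f : X → ℝ} (hf : ContinuousOn f (closure s)) :
    IntegrableOn f s μ :=
  (hf.integrableOn_compact hs.isCompact_closure).mono_set subset_closure

theorem setIntegral_pos_of_continuousOn {X : Type*} [TopologicalSpace X] [MeasurableSpace X]
    [OpensMeasurableSpace X] {μ : Measure X} [μ.IsOpenPosMeasure] {U : Set X} (hU : IsOpen U)
    {f : X → ℝ} (hf : ContinuousOn f U) (hfi : IntegrableOn f U μ) (hf0 : ∀ x ∈ U, 0 ≤ f x)
    {x : X} (hx : x ∈ U) (hfx : f x ≠ 0) : 0 < ∫ y in U, f y ∂μ := by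
  rw [setIntegral_pos_iff_support_of_nonneg_ae (ae_restrict_of_forall_mem hU.measurableSet hf0) hfi,
    inter_comm]
  exact (hf.isOpen_inter_preimage hU isOpen_compl_singleton).measure_pos μ ⟨x, hx, hfx⟩

section MongeAmpere

open Pointwise

variable {n : ℕ} {Ω : Set (Eucl n)}

theorem LpN_nonneg (p : ℝ) (v : Eucl n → ℝ) : 0 ≤ LpN Ω p v :=
  Real.rpow_nonneg (integral_nonneg fun _ => Real.rpow_nonneg (abs_nonneg _) _) _

theorem LpN_pow_succ_of_nonpos (hΩ : MeasurableSet Ω) {v : Eucl n → ℝ}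
    (hv0 : ∀ x ∈ Ω, v x ≤ 0) :
    LpN Ω ((n : ℝ) + 1) v ^ (n + 1) = ∫ x in Ω, (-v x) ^ (n + 1) := by
  have habs : ∫ x in Ω, |v x| ^ ((n : ℝ) + 1) = ∫ x in Ω, (-v x) ^ (n + 1) :=
    setIntegral_congr_fun hΩ fun x hx => by
      rw [abs_of_nonpos (hv0 x hx), ← Real.rpow_natCast, Nat.cast_succ]
  rw [LpN, habs, one_div, ← Nat.cast_succ]
  exact Real.rpow_inv_natCast_pow (setIntegral_nonneg hΩ fun x hx => pow_nonneg
    (neg_nonneg.2 (hv0 x hx)) _) n.succ_ne_zero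

theorem Rq_toReal (hΩ : MeasurableSet Ω) {v : Eucl n → ℝ} (hv : ContinuousOn v Ω)
    (hv0 : ∀ x ∈ Ω, v x ≤ 0) :
    (Rq Ω v).toReal = (MAenergy Ω v).toReal / LpN Ω ((n : ℝ) + 1) v ^ (n + 1) := by
  rw [Rq, ENNReal.toReal_div, LpN_pow_succ_of_nonpos hΩ hv0, integral_eq_lintegral_of_nonneg_ae
    (ae_restrict_of_forall_mem hΩ fun x hx => pow_nonneg (neg_nonneg.2 (hv0 x hx)) _)
    ((hv.neg.pow _).aestronglyMeasurable hΩ)]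

theorem MAenergy_eq_setLIntegral_mul (hΩ : IsOpen Ω) {v : Eucl n → ℝ} (hv : ContinuousOn v Ω)
    (hv0 : ∀ x ∈ Ω, v x ≤ 0) {g : Eucl n → ℝ≥0∞} (hg : AEMeasurable g (volume.restrict Ω))
    (hM : ∀ E ⊆ Ω, MeasurableSet E → MAm Ω v E = ∫⁻ x in E, g x) :
    MAenergy Ω v = ∫⁻ x in Ω, g x * ENNReal.ofReal (-v x) := by
  set μ := (volume.restrict Ω).withDensity g
  have hac : μ ≪ volume.restrict Ω := withDensity_absolutelyContinuous _ _
  have hvm : AEMeasurable (fun x => -v x) (volume.restrict Ω) :=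
    (hv.aemeasurable hΩ.measurableSet).neg
  have hlevel (t : ℝ) : MAm Ω v {x ∈ Ω | t < -v x} = μ {x | t < -v x} := by
    have hmeas : MeasurableSet {x ∈ Ω | t < -v x} :=
      (hv.neg.isOpen_inter_preimage hΩ isOpen_Ioi).measurableSet
    rw [hM _ (sep_subset _ _) hmeas, withDensity_apply',
      Measure.restrict_restrict' hΩ.measurableSet, inter_comm]
    rfl
  calc MAenergy Ω v = ∫⁻ t in Ioi 0, μ {x | t < -v x} := lintegral_congr hlevel
    _ = ∫⁻ x, ENNReal.ofReal (-v x) ∂μ := (lintegral_eq_lintegral_meas_lt μ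
        (hac.ae_le (ae_restrict_of_forall_mem hΩ.measurableSet fun x hx =>
          neg_nonneg.2 (hv0 x hx))) (hvm.mono_ac hac)).symm
    _ = ∫⁻ x in Ω, g x * ENNReal.ofReal (-v x) :=
        lintegral_withDensity_eq_lintegral_mul₀ hg hvm.ennreal_ofReal

theorem MAenergy_toReal_eq_mul_integral (hΩ : IsOpen Ω) {u v : Eucl n → ℝ} (hu : ContinuousOn u Ω)
    (hv : ContinuousOn v Ω) (hu0 : ∀ x ∈ Ω, u x ≤ 0) (hv0 : ∀ x ∈ Ω, v x ≤ 0) {lam : ℝ≥0∞}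
    (hM : ∀ E ⊆ Ω, MeasurableSet E → MAm Ω v E = ∫⁻ x in E, lam * ENNReal.ofReal ((-u x) ^ n)) :
    (MAenergy Ω v).toReal = lam.toReal * ∫ x in Ω, -v x * (-u x) ^ n := by
  have hΩm := hΩ.measurableSet
  have hum : AEMeasurable (fun x => ENNReal.ofReal ((-u x) ^ n)) (volume.restrict Ω) :=
    ((hu.neg.pow n).aemeasurable hΩm).ennreal_ofReal
  have hvum : AEMeasurable (fun x => ENNReal.ofReal (-v x * (-u x) ^ n)) (volume.restrict Ω) :=
    ((hv.neg.mul (hu.neg.pow n)).aemeasurable hΩm).ennreal_ofReal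
  rw [MAenergy_eq_setLIntegral_mul hΩ hv hv0 (hum.const_mul lam) hM,
    integral_eq_lintegral_of_nonneg_ae (ae_restrict_of_forall_mem hΩm fun x hx =>
      mul_nonneg (neg_nonneg.2 (hv0 x hx)) (pow_nonneg (neg_nonneg.2 (hu0 x hx)) _))
      ((hv.neg.mul (hu.neg.pow n)).aestronglyMeasurable hΩm),
    ← ENNReal.toReal_mul, ← lintegral_const_mul'' lam hvum]
  refine congrArg _ (setLIntegral_congr_fun hΩm fun x hx => ?_)
  rw [ENNReal.ofReal_mul (neg_nonneg.2 (hv0 x hx)), mul_comm (ENNReal.ofReal _), mul_assoc]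

theorem subdiff_eq_smul_of_eqOn {u w : Eucl n → ℝ} {c : ℝ} (hc : 0 < c)
    (h : EqOn w (fun x => c * u x) Ω) {x : Eucl n} (hx : x ∈ Ω) :
    subdiff Ω w x = c • subdiff Ω u x := by
  ext p
  rw [mem_smul_set_iff_inv_smul_mem₀ hc.ne']
  refine forall₂_congr fun y hy => ?_
  rw [h hx, h hy, real_inner_smul_left]
  beta_reduce
  conv_rhs => rw [← mul_le_mul_iff_of_pos_left hc, mul_add, mul_inv_cancel_left₀ hc.ne']

theorem MAm_eq_of_eqOn_const_mul {u w : Eucl n → ℝ} {c : ℝ} (hc : 0 < c)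
    (h : EqOn w (fun x => c * u x) Ω) {E : Set (Eucl n)} (hE : E ⊆ Ω) :
    MAm Ω w E = ENNReal.ofReal (c ^ n) * MAm Ω u E := by
  have himage : subdiffImage Ω w E = c • subdiffImage Ω u E := by
    rw [subdiffImage, subdiffImage, smul_set_iUnion₂]
    exact iUnion₂_congr fun x hx => subdiff_eq_smul_of_eqOn hc h (hE hx)
  rw [MAm, MAm, himage, Measure.addHaar_smul, finrank_euclideanSpace_fin,
    abs_of_pos (pow_pos hc n)]

theorem LpN_pos (hΩ : IsOpen Ω) (hΩb : Bornology.IsBounded Ω) {v : Eucl n → ℝ}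
    (hv : ContinuousOn v (closure Ω)) (hv0 : ∀ x ∈ Ω, v x ≤ 0) (hne : ∃ x ∈ Ω, v x ≠ 0) :
    0 < LpN Ω ((n : ℝ) + 1) v := by
  obtain ⟨x, hx, hvx⟩ := hne
  have hint : 0 < ∫ y in Ω, (-v y) ^ (n + 1) :=
    setIntegral_pos_of_continuousOn (μ := volume) hΩ ((hv.mono subset_closure).neg.pow _)
      (ContinuousOn.integrableOn_of_isBounded hΩb (hv.neg.pow _))
      (fun y hy => pow_nonneg (neg_nonneg.2 (hv0 y hy)) _) hx (pow_ne_zero _ (neg_ne_zero.2 hvx))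
  rw [← LpN_pow_succ_of_nonpos hΩ.measurableSet hv0, ← zero_pow n.succ_ne_zero] at hint
  exact lt_of_pow_lt_pow_left₀ _ (LpN_nonneg _ _) hint

theorem integral_mul_pow_eq_of_Rq_mul_LpN_pow_eq (hΩ : IsOpen Ω) {u w : Eucl n → ℝ}
    (hu : ContinuousOn u Ω) (hw : ContinuousOn w Ω) (hu0 : ∀ x ∈ Ω, u x ≤ 0)
    (hw0 : ∀ x ∈ Ω, w x ≤ 0) (hw_pos : 0 < LpN Ω ((n : ℝ) + 1) w) (hR : Rq Ω u ≠ 0)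
    (hR' : Rq Ω u ≠ ⊤)
    (hMw : ∀ E ⊆ Ω, MeasurableSet E →
      MAm Ω w E = ∫⁻ x in E, Rq Ω u * ENNReal.ofReal ((-u x) ^ n))
    (heq : Rq Ω w * ENNReal.ofReal (LpN Ω ((n : ℝ) + 1) w ^ n) =
      Rq Ω u * ENNReal.ofReal (LpN Ω ((n : ℝ) + 1) u ^ n)) :
    ∫ x in Ω, -w x * (-u x) ^ n = LpN Ω ((n : ℝ) + 1) w * LpN Ω ((n : ℝ) + 1) u ^ n := by
  have h := congrArg ENNReal.toReal heq
  rw [ENNReal.toReal_mul, ENNReal.toReal_mul, ENNReal.toReal_ofReal (pow_nonneg (LpN_nonneg _ _) _),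
    ENNReal.toReal_ofReal (pow_nonneg (LpN_nonneg _ _) _), Rq_toReal hΩ.measurableSet hw hw0,
    MAenergy_toReal_eq_mul_integral hΩ hu hw hu0 hw0 hMw, div_mul_eq_mul_div, pow_succ',
    mul_div_mul_right _ _ (pow_ne_zero n hw_pos.ne'), mul_div_assoc,
    mul_right_inj' (ENNReal.toReal_ne_zero.2 ⟨hR, hR'⟩), div_eq_iff hw_pos.ne'] at h
  rw [h, mul_comm]

theorem eqOn_div_mul_of_integral_mul_pow_eq (hn : 1 ≤ n) (hΩ : IsOpen Ω)
    (hΩb : Bornology.IsBounded Ω) {u w : Eucl n → ℝ} (hu : ContinuousOn u (closure Ω))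
    (hw : ContinuousOn w (closure Ω)) (hu0 : ∀ x ∈ Ω, u x ≤ 0) (hw0 : ∀ x ∈ Ω, w x ≤ 0)
    (hu_pos : 0 < LpN Ω ((n : ℝ) + 1) u) (hw_pos : 0 < LpN Ω ((n : ℝ) + 1) w)
    (hHolder : ∫ x in Ω, -w x * (-u x) ^ n =
      LpN Ω ((n : ℝ) + 1) w * LpN Ω ((n : ℝ) + 1) u ^ n) :
    EqOn u (fun x => LpN Ω ((n : ℝ) + 1) u / LpN Ω ((n : ℝ) + 1) w * w x) Ω := by
  have hΩm := hΩ.measurableSet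
  have hae := ae_mul_eq_mul_of_integral_mul_pow_eq hn
    (ae_restrict_of_forall_mem hΩm fun x hx => neg_nonneg.2 (hw0 x hx))
    (ae_restrict_of_forall_mem hΩm fun x hx => neg_nonneg.2 (hu0 x hx))
    (ContinuousOn.integrableOn_of_isBounded hΩb (hw.neg.pow _))
    (ContinuousOn.integrableOn_of_isBounded hΩb (hu.neg.pow _))
    (ContinuousOn.integrableOn_of_isBounded hΩb (hw.neg.mul (hu.neg.pow _))) hw_pos hu_pos
    (LpN_pow_succ_of_nonpos hΩm hw0).symm (LpN_pow_succ_of_nonpos hΩm hu0).symm hHolder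
  refine Measure.eqOn_open_of_ae_eq (μ := volume) ?_ hΩ (hu.mono subset_closure)
    (continuousOn_const.mul (hw.mono subset_closure))
  filter_upwards [hae] with x hx
  field_simp
  linarith

theorem eq_one_of_eqOn_const_mul (hn : n ≠ 0) (hΩ : IsOpen Ω) {u w : Eucl n → ℝ}
    (hu : ContinuousOn u Ω) (hu0 : ∀ x ∈ Ω, u x ≤ 0) (hu_pos : 0 < LpN Ω ((n : ℝ) + 1) u)
    (hR : Rq Ω u ≠ 0) (hR' : Rq Ω u ≠ ⊤) {c : ℝ} (hc : 0 < c)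
    (huw : EqOn u (fun x => c * w x) Ω)
    (hMw : ∀ E ⊆ Ω, MeasurableSet E →
      MAm Ω w E = ∫⁻ x in E, Rq Ω u * ENNReal.ofReal ((-u x) ^ n)) :
    c = 1 := by
  have hMu (E : Set (Eucl n)) (hE : E ⊆ Ω) (hEm : MeasurableSet E) : MAm Ω u E =
      ∫⁻ x in E, ENNReal.ofReal (c ^ n) * Rq Ω u * ENNReal.ofReal ((-u x) ^ n) := by
    simp_rw [MAm_eq_of_eqOn_const_mul hc huw hE, hMw E hE hEm, mul_assoc]
    exact (lintegral_const_mul' _ _ ENNReal.ofReal_ne_top).symm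
  have hIu := MAenergy_toReal_eq_mul_integral hΩ hu hu hu0 hu0 hMu
  simp_rw [← pow_succ', ← LpN_pow_succ_of_nonpos hΩ.measurableSet hu0] at hIu
  have hRu := Rq_toReal hΩ.measurableSet hu hu0
  rw [hIu, ENNReal.toReal_mul, ENNReal.toReal_ofReal (pow_nonneg hc.le n), mul_div_assoc,
    div_self (pow_ne_zero _ hu_pos.ne'), mul_one] at hRu
  exact (pow_eq_one_iff_of_nonneg hc.le hn).1 (mul_right_cancel₀
    (ENNReal.toReal_ne_zero.2 ⟨hR, hR'⟩) (hRu.symm.trans (one_mul _).symm))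

end MongeAmpere

theorem equality_case_monotonicity_general {n : ℕ} (hn : 1 ≤ n)
    (Ω : Set (Eucl n)) (hΩo : IsOpen Ω)
    (hΩb : Bornology.IsBounded Ω)
    (u w : Eucl n → ℝ) (huK : memK Ω u) (hwK : memK Ω w)
    (hRpos : 0 < Rq Ω u) (hRfin : Rq Ω u < ⊤)
    (hMw : ∀ E ⊆ Ω, MeasurableSet E →
      MAm Ω w E = ∫⁻ x in E, Rq Ω u * ENNReal.ofReal ((-u x) ^ n))
    (heq : Rq Ω w * ENNReal.ofReal (LpN Ω ((n : ℝ) + 1) w ^ n) =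
      Rq Ω u * ENNReal.ofReal (LpN Ω ((n : ℝ) + 1) u ^ n)) :
    Set.EqOn w u Ω := by
  obtain ⟨huC, huConv, huNe, huBd⟩ := huK
  obtain ⟨hwC, hwConv, hwNe, hwBd⟩ := hwK
  have : NeZero n := ⟨by omega⟩ -- makes `Eucl n` nontrivial
  have hu0 := huConv.nonpos_of_nonpos_on_frontier hΩo hΩb huC fun x hx => (huBd x hx).le
  have hw0 := hwConv.nonpos_of_nonpos_on_frontier hΩo hΩb hwC fun x hx => (hwBd x hx).le
  have hu_pos := LpN_pos hΩo hΩb huC hu0 huNe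
  have hw_pos := LpN_pos hΩo hΩb hwC hw0 hwNe
  have hHolder := integral_mul_pow_eq_of_Rq_mul_LpN_pow_eq hΩo (huC.mono subset_closure)
    (hwC.mono subset_closure) hu0 hw0 hw_pos hRpos.ne' hRfin.ne hMw heq
  have huw := eqOn_div_mul_of_integral_mul_pow_eq hn hΩo hΩb huC hwC hu0 hw0 hu_pos hw_pos hHolder
  have hc := eq_one_of_eqOn_const_mul (NeZero.ne n) hΩo (huC.mono subset_closure) hu0 hu_pos
    hRpos.ne' hRfin.ne (div_pos hu_pos hw_pos) huw hMw
  intro x hx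
  simpa [hc] using (huw hx).symm

/-- equality case in the monotonicity relation forces `w = u` on `Ω`. -/
theorem equality_case_monotonicity {n : ℕ} (hn : 1 ≤ n)
    (Ω : Set (Eucl n)) (hΩo : IsOpen Ω) (hΩc : Convex ℝ Ω)
    (hΩb : Bornology.IsBounded Ω) (hΩne : Ω.Nonempty)
    (u w : Eucl n → ℝ) (huK : memK Ω u) (hwK : memK Ω w)
    (hRpos : 0 < Rq Ω u) (hRfin : Rq Ω u < ⊤)
    (hMw : ∀ E ⊆ Ω, MeasurableSet E →
      MAm Ω w E = ∫⁻ x in E, Rq Ω u * ENNReal.ofReal ((-u x) ^ n))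
    (heq : Rq Ω w * ENNReal.ofReal (LpN Ω ((n : ℝ) + 1) w ^ n) =
      Rq Ω u * ENNReal.ofReal (LpN Ω ((n : ℝ) + 1) u ^ n)) :
    Set.EqOn w u Ω :=
  equality_case_monotonicity_general hn Ω hΩo hΩb u w huK hwK hRpos hRfin hMw heq
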